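/- Under the assumptions of the previous Green's identity, if additionally $u_\nu$ is constant on $\Gamma_0$, then $u_\nu = \frac{N|\Sigma\cap\Omega|}{|\Gamma_0|}$ on $\Gamma_0$, and consequently for every harmonic $h$ with $h_\nu = 0$ on $\Gamma_1$ one has the mean value identity $\frac{1}{|\Sigma\cap\Omega|}\int_{\Sigma\cap\Omega} h\,dx = \frac{1}{|\Gamma_0|}\int_{\Gamma_0} h\,dS_x$. -/

import Mathlib

open MeasureTheory
open scoped ENNReal RealInnerProductSpace

/-! Since `u_ν ≡ c` on `Γ₀`, the divergence identity reads `N|G| = c|Γ₀|`, which determines `c`;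
substituting `u_ν = c` into the Green identity for `h` gives `∫_G h = (c/N) ∫_{Γ₀} h`, which is the
mean value identity for this value of `c`. -/

section ConstantOnSet

variable {α : Type*} [MeasurableSpace α] {μ : Measure α} {s : Set α} {f : α → ℝ} {c : ℝ}

theorem setIntegral_eq_measureReal_mul_of_eqOn_const (hs : MeasurableSet s)
    (hf : ∀ x ∈ s, f x = c) : ∫ x in s, f x ∂μ = μ.real s * c := by
  rw [setIntegral_congr_fun hs hf, setIntegral_const, smul_eq_mul]

theorem setIntegral_mul_eq_const_mul_of_eqOn_const (hs : MeasurableSet s)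
    (hf : ∀ x ∈ s, f x = c) (g : α → ℝ) :
    ∫ x in s, f x * g x ∂μ = c * ∫ x in s, g x ∂μ := by
  rw [setIntegral_congr_fun hs fun x hx => by rw [hf x hx], integral_const_mul]

end ConstantOnSet

theorem duality_i_implies_ii_general {N : ℕ} (hN : 1 ≤ N)
    {G Γ₀ : Set (EuclideanSpace ℝ (Fin N))}
    (hΓ₀meas : MeasurableSet Γ₀)
    (hΓ₀pos : 0 < μH[(N : ℝ) - 1] Γ₀) (hΓ₀fin : μH[(N : ℝ) - 1] Γ₀ < ⊤)
    (hGpos : 0 < volume G) (hGfin : volume G < ⊤)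
    {u h : EuclideanSpace ℝ (Fin N) → ℝ}
    {ν : EuclideanSpace ℝ (Fin N) → EuclideanSpace ℝ (Fin N)}
    {c : ℝ} (hconst : ∀ x ∈ Γ₀, ⟪gradient u x, ν x⟫ = c)
    (hGreen1 : (N : ℝ) * (volume G).toReal
      = ∫ x in Γ₀, ⟪gradient u x, ν x⟫ ∂μH[(N : ℝ) - 1])
    (hGreenh : ∫ x in G, h x
      = (1 / (N : ℝ)) * ∫ x in Γ₀, ⟪gradient u x, ν x⟫ * h x ∂μH[(N : ℝ) - 1]) :
    c = (N : ℝ) * (volume G).toReal / (μH[(N : ℝ) - 1] Γ₀).toReal ∧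
    (volume G).toReal⁻¹ * ∫ x in G, h x
      = (μH[(N : ℝ) - 1] Γ₀).toReal⁻¹ * ∫ x in Γ₀, h x ∂μH[(N : ℝ) - 1] := by
  have hΓ₀ : 0 < (μH[(N : ℝ) - 1] Γ₀).toReal := ENNReal.toReal_pos hΓ₀pos.ne' hΓ₀fin.ne
  have hG : 0 < (volume G).toReal := ENNReal.toReal_pos hGpos.ne' hGfin.ne
  have hN₀ : (N : ℝ) ≠ 0 := by positivity
  have hflux := setIntegral_eq_measureReal_mul_of_eqOn_const (μ := μH[(N : ℝ) - 1]) hΓ₀meas hconst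
  rw [measureReal_def] at hflux
  have hc : c = (N : ℝ) * (volume G).toReal / (μH[(N : ℝ) - 1] Γ₀).toReal := by
    rw [eq_div_iff hΓ₀.ne', hGreen1, hflux, mul_comm]
  refine ⟨hc, ?_⟩
  rw [hGreenh, setIntegral_mul_eq_const_mul_of_eqOn_const hΓ₀meas hconst, hc]
  field_simp

/-- Implication (i) ⟹ (ii) of the Duality Theorem: if `u_ν` is constant on `Γ₀`,
then the constant equals `N|G|/|Γ₀|` (by the divergence theorem `hGreen1`), and for
every harmonic `h` with `h_ν = 0` on `Γ₁` (for which the Green identity `hGreenh`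
holds) one has the mean value identity
`(1/|G|) ∫_G h dx = (1/|Γ₀|) ∫_{Γ₀} h dS`. -/
theorem duality_i_implies_ii {N : ℕ} (hN : 1 ≤ N)
    {G Γ₀ : Set (EuclideanSpace ℝ (Fin N))}
    (hΓ₀meas : MeasurableSet Γ₀)
    (hΓ₀pos : 0 < μH[(N : ℝ) - 1] Γ₀) (hΓ₀fin : μH[(N : ℝ) - 1] Γ₀ < ⊤)
    (hGpos : 0 < volume G) (hGfin : volume G < ⊤)
    {u h : EuclideanSpace ℝ (Fin N) → ℝ}
    {ν : EuclideanSpace ℝ (Fin N) → EuclideanSpace ℝ (Fin N)}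
    {c : ℝ} (hconst : ∀ x ∈ Γ₀, ⟪gradient u x, ν x⟫ = c)
    (hinth : IntegrableOn h Γ₀ μH[(N : ℝ) - 1])
    (hGreen1 : (N : ℝ) * (volume G).toReal
      = ∫ x in Γ₀, ⟪gradient u x, ν x⟫ ∂μH[(N : ℝ) - 1])
    (hGreenh : ∫ x in G, h x
      = (1 / (N : ℝ)) * ∫ x in Γ₀, ⟪gradient u x, ν x⟫ * h x ∂μH[(N : ℝ) - 1]) :
    c = (N : ℝ) * (volume G).toReal / (μH[(N : ℝ) - 1] Γ₀).toReal ∧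
    (volume G).toReal⁻¹ * ∫ x in G, h x
      = (μH[(N : ℝ) - 1] Γ₀).toReal⁻¹ * ∫ x in Γ₀, h x ∂μH[(N : ℝ) - 1] :=
  duality_i_implies_ii_general hN hΓ₀meas hΓ₀pos hΓ₀fin hGpos hGfin hconst hGreen1 hGreenh
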